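/- arXiv:math/0403040 — 4 statements merged into one kernel-verified Lean document; each statement's English description precedes it below -/
import Mathlib

section
/- Fix α ∈ ℝ and ε > 0. For (x, y, z) ∈ ℝ³, set r² = x² + y² + z² and define P_ε(x,y,z) = −(α/2)·(z/√(r² + ε²) − 1)·y/(x² + y² + ε²) and Q_ε(x,y,z) = (α/2)·(z/√(r² + ε²) − 1)·x/(x² + y² + ε²). Then at every point of ℝ³: ∂Q_ε/∂x − ∂P_ε/∂y = −α z/(2(r² + ε²)^{3/2}) + α ε² z/(2(r² + ε²)^{3/2}(x² + y² + ε²)) + (z/√(r² + ε²) − 1)·α ε²/(x² + y² + ε²)². -/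
lemma monopole_aux (α z : ℝ) (p q : ℝ → ℝ) (t pd : ℝ)
    (hp : HasDerivAt p pd t) (hq : HasDerivAt q pd t)
    (hp0 : 0 < p t) (hq0 : 0 < q t) :
    HasDerivAt (fun u => (α / 2) * (z / Real.sqrt (p u) - 1) * u / q u)
      (((((α / 2) * ((0 * Real.sqrt (p t) - z * (pd / (2 * Real.sqrt (p t)))) /
              Real.sqrt (p t) ^ 2)) * t
          + (α / 2) * (z / Real.sqrt (p t) - 1) * 1) * q t
        - (α / 2) * (z / Real.sqrt (p t) - 1) * t * pd) / q t ^ 2) t := by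
  have hs : (0:ℝ) < Real.sqrt (p t) := Real.sqrt_pos.mpr hp0
  have hsq := hp.sqrt hp0.ne'
  have hdiv := (hasDerivAt_const t z).div hsq hs.ne'
  have hmul := ((hdiv.sub_const 1).const_mul (α / 2)).mul (hasDerivAt_id t)
  exact hmul.div hq hq0.ne'

/-- The `dx∧dy` component of the regularized Dirac monopole curvature `F_ε = dA_ε`,
where `A_ε = (α/2)(z/√(r²+ε²) − 1)(x dy − y dx)/(x²+y²+ε²)` and `r² = x²+y²+z²`,
decomposes as monopole term + correction term + wire term:
`∂Q_ε/∂x − ∂P_ε/∂y = −αz/(2(r²+ε²)^{3/2}) + αε²z/(2(r²+ε²)^{3/2}(x²+y²+ε²))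
 + (z/√(r²+ε²) − 1)·αε²/(x²+y²+ε²)²`. -/
theorem regularized_monopole_curvature_xy (α : ℝ) (ε : ℝ) (hε : 0 < ε) (x y z : ℝ) :
    deriv (fun t : ℝ =>
        (α / 2) * (z / Real.sqrt (t ^ 2 + y ^ 2 + z ^ 2 + ε ^ 2) - 1) * t
          / (t ^ 2 + y ^ 2 + ε ^ 2)) x
      - deriv (fun t : ℝ =>
        -((α / 2) * (z / Real.sqrt (x ^ 2 + t ^ 2 + z ^ 2 + ε ^ 2) - 1) * t
          / (x ^ 2 + t ^ 2 + ε ^ 2))) y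
      = -(α * z / (2 * (Real.sqrt (x ^ 2 + y ^ 2 + z ^ 2 + ε ^ 2)) ^ 3))
        + α * ε ^ 2 * z / (2 * (Real.sqrt (x ^ 2 + y ^ 2 + z ^ 2 + ε ^ 2)) ^ 3
            * (x ^ 2 + y ^ 2 + ε ^ 2))
        + (z / Real.sqrt (x ^ 2 + y ^ 2 + z ^ 2 + ε ^ 2) - 1) * α * ε ^ 2
            / (x ^ 2 + y ^ 2 + ε ^ 2) ^ 2 := by
  have hp1 : HasDerivAt (fun t : ℝ => t ^ 2 + y ^ 2 + z ^ 2 + ε ^ 2) (2 * x) x := by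
    simpa using (((hasDerivAt_pow 2 x).add_const (y ^ 2)).add_const (z ^ 2)).add_const (ε ^ 2)
  have hq1 : HasDerivAt (fun t : ℝ => t ^ 2 + y ^ 2 + ε ^ 2) (2 * x) x := by
    simpa using ((hasDerivAt_pow 2 x).add_const (y ^ 2)).add_const (ε ^ 2)
  have hp2 : HasDerivAt (fun t : ℝ => x ^ 2 + t ^ 2 + z ^ 2 + ε ^ 2) (2 * y) y := by
    simpa using ((((hasDerivAt_pow 2 y).const_add (x ^ 2)).add_const (z ^ 2)).add_const (ε ^ 2))
  have hq2 : HasDerivAt (fun t : ℝ => x ^ 2 + t ^ 2 + ε ^ 2) (2 * y) y := by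
    simpa using (((hasDerivAt_pow 2 y).const_add (x ^ 2)).add_const (ε ^ 2))
  have hp0 : (0:ℝ) < x ^ 2 + y ^ 2 + z ^ 2 + ε ^ 2 := by positivity
  have hq0 : (0:ℝ) < x ^ 2 + y ^ 2 + ε ^ 2 := by positivity
  have h1 := monopole_aux α z _ _ x (2 * x) hp1 hq1 hp0 hq0
  have h2 := (monopole_aux α z _ _ y (2 * y) hp2 hq2 hp0 hq0).fun_neg
  rw [h1.deriv, h2.deriv]
  have hs : (0:ℝ) < Real.sqrt (x ^ 2 + y ^ 2 + z ^ 2 + ε ^ 2) := Real.sqrt_pos.mpr hp0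
  set s := Real.sqrt (x ^ 2 + y ^ 2 + z ^ 2 + ε ^ 2) with hsdef
  field_simp
  ring
end

section
/- Fix α ∈ ℝ. Then the limit as ε → 0⁺ of ∫_{{(x,y) : x² + y² < 1}} ( −√(1 − x² − y²)/√(1 + ε²) − 1 ) · α ε²/(x² + y² + ε²)² dx dy exists and equals −2πα. -/
open Real MeasureTheory Filter

lemma disk_measurable : MeasurableSet {p : ℝ × ℝ | p.1 ^ 2 + p.2 ^ 2 < 1} :=
  measurableSet_lt (by fun_prop) measurable_const

/-- Polar reduction: the integral over the unit disk of a radial function. -/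
lemma disk_integral_radial (g : ℝ → ℝ) :
    ∫ p in {p : ℝ × ℝ | p.1 ^ 2 + p.2 ^ 2 < 1}, g (p.1 ^ 2 + p.2 ^ 2)
      = (2 * π) * ∫ r in Set.Ioo (0:ℝ) 1, r * g (r ^ 2) := by
  rw [← integral_indicator disk_measurable, ← integral_comp_polarCoord_symm]
  have key : Set.EqOn
      (fun p : ℝ × ℝ => p.1 • ({p : ℝ × ℝ | p.1 ^ 2 + p.2 ^ 2 < 1}.indicator
        (fun p => g (p.1 ^ 2 + p.2 ^ 2)) (polarCoord.symm p)))
      (fun p : ℝ × ℝ => ((Set.Ioo (0:ℝ) 1).indicator (fun r => r * g (r ^ 2)) p.1)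
        * (fun _ : ℝ => (1:ℝ)) p.2)
      polarCoord.target := by
    intro p hp
    rw [polarCoord_target] at hp
    have hr : 0 < p.1 := hp.1
    have hsq : (p.1 * Real.cos p.2) ^ 2 + (p.1 * Real.sin p.2) ^ 2 = p.1 ^ 2 := by
      have h := Real.sin_sq_add_cos_sq p.2
      nlinarith [h]
    simp only [polarCoord_symm_apply, Set.indicator_apply, Set.mem_setOf_eq, Set.mem_Ioo,
      hsq, smul_eq_mul]
    by_cases h : p.1 ^ 2 < 1
    · have h1 : p.1 < 1 := by nlinarith
      rw [if_pos h, if_pos ⟨hr, h1⟩]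
      ring
    · have h1 : ¬ (0 < p.1 ∧ p.1 < 1) := by
        rintro ⟨-, h1⟩
        exact h (by nlinarith)
      rw [if_neg h, if_neg h1]
      ring
  rw [setIntegral_congr_fun polarCoord.open_target.measurableSet key,
    polarCoord_target, Measure.volume_eq_prod,
    setIntegral_prod_mul ((Set.Ioo (0:ℝ) 1).indicator (fun r => r * g (r ^ 2)))
      (fun _ : ℝ => (1:ℝ)) (Set.Ioi 0) (Set.Ioo (-π) π),
    setIntegral_indicator measurableSet_Ioo,
    Set.inter_eq_self_of_subset_right Set.Ioo_subset_Ioi_self]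
  have : ∫ _ in Set.Ioo (-π) π, (1:ℝ) = 2 * π := by
    simp only [setIntegral_const, smul_eq_mul, mul_one, Real.volume_Ioo]
    rw [Real.volume_real_Ioo_of_le (by linarith [Real.pi_pos] : -π ≤ π)]
    ring
  rw [this]
  ring

lemma int_lower {ε : ℝ} (hε : 0 < ε) :
    ∫ r in Set.Ioo (0:ℝ) 1, r * (-2 * ε ^ 2 / (r ^ 2 + ε ^ 2) ^ 2)
      = ε ^ 2 / (1 + ε ^ 2) - 1 := by
  rw [← MeasureTheory.integral_Ioc_eq_integral_Ioo,
    ← intervalIntegral.integral_of_le (by norm_num : (0:ℝ) ≤ 1)]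
  have hderiv : ∀ x ∈ Set.uIcc (0:ℝ) 1,
      HasDerivAt (fun r : ℝ => ε ^ 2 / (r ^ 2 + ε ^ 2))
        (x * (-2 * ε ^ 2 / (x ^ 2 + ε ^ 2) ^ 2)) x := by
    intro x _
    have hne : x ^ 2 + ε ^ 2 ≠ 0 := by positivity
    have hd : HasDerivAt (fun r : ℝ => r ^ 2 + ε ^ 2) (2 * x) x := by
      simpa using (hasDerivAt_pow 2 x).add_const (ε ^ 2)
    have h := (hasDerivAt_const x (ε ^ 2)).div hd hne
    refine h.congr_deriv ?_
    field_simp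
    ring
  rw [intervalIntegral.integral_eq_sub_of_hasDerivAt hderiv ?_]
  · have h0 : ε ^ 2 ≠ 0 := by positivity
    rw [show (0:ℝ) ^ 2 + ε ^ 2 = ε ^ 2 by ring, div_self h0]
    norm_num
  · apply Continuous.intervalIntegrable
    exact continuous_id.mul (continuous_const.div (by fun_prop) (fun x => by positivity))

lemma int_upper {ε : ℝ} (hε : 0 < ε) :
    ∫ r in Set.Ioo (0:ℝ) 1, r * ((r ^ 2 + ε ^ 2 - 2) * ε ^ 2 / (r ^ 2 + ε ^ 2) ^ 2)
      = ε ^ 2 / 2 * (Real.log (1 + ε ^ 2) - Real.log (ε ^ 2)) + ε ^ 2 / (1 + ε ^ 2) - 1 := by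
  rw [← MeasureTheory.integral_Ioc_eq_integral_Ioo,
    ← intervalIntegral.integral_of_le (by norm_num : (0:ℝ) ≤ 1)]
  have hderiv : ∀ x ∈ Set.uIcc (0:ℝ) 1,
      HasDerivAt (fun r : ℝ => ε ^ 2 / 2 * Real.log (r ^ 2 + ε ^ 2) + ε ^ 2 / (r ^ 2 + ε ^ 2))
        (x * ((x ^ 2 + ε ^ 2 - 2) * ε ^ 2 / (x ^ 2 + ε ^ 2) ^ 2)) x := by
    intro x _
    have hne : x ^ 2 + ε ^ 2 ≠ 0 := by positivity
    have hd : HasDerivAt (fun r : ℝ => r ^ 2 + ε ^ 2) (2 * x) x := by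
      simpa using (hasDerivAt_pow 2 x).add_const (ε ^ 2)
    have hlog := (hd.log hne).const_mul (ε ^ 2 / 2)
    have hdiv := (hasDerivAt_const x (ε ^ 2)).div hd hne
    have h := hlog.add hdiv
    refine h.congr_deriv ?_
    field_simp
    ring
  rw [intervalIntegral.integral_eq_sub_of_hasDerivAt hderiv ?_]
  · have h0 : ε ^ 2 ≠ 0 := by positivity
    rw [show (0:ℝ) ^ 2 + ε ^ 2 = ε ^ 2 by ring, show (1:ℝ) ^ 2 + ε ^ 2 = 1 + ε ^ 2 by ring,
      div_self h0]
    ring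
  · apply Continuous.intervalIntegrable
    exact continuous_id.mul ((by fun_prop : Continuous fun r : ℝ => (r ^ 2 + ε ^ 2 - 2) * ε ^ 2).div
      (by fun_prop) (fun x => by positivity))

lemma integrableOn_disk {f : ℝ × ℝ → ℝ} (hf : Continuous f) :
    IntegrableOn f {p : ℝ × ℝ | p.1 ^ 2 + p.2 ^ 2 < 1} := by
  refine (hf.continuousOn.integrableOn_compact
    (isCompact_closedBall (0 : ℝ × ℝ) 1)).mono_set ?_
  intro p hp
  simp only [Set.mem_setOf_eq] at hp
  have h1 : |p.1| ≤ 1 := by nlinarith [sq_abs p.1, abs_nonneg p.1, sq_nonneg p.2]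
  have h2 : |p.2| ≤ 1 := by nlinarith [sq_abs p.2, abs_nonneg p.2, sq_nonneg p.1]
  rw [Metric.mem_closedBall, Prod.dist_eq]
  simp only [Prod.fst_zero, Prod.snd_zero, Real.dist_eq, sub_zero]
  exact max_le h1 h2

/-- The flux of the wire term `F³_ε = (z/√(r²+ε²) − 1)·αε² dx∧dy/(x²+y²+ε²)²` of the
regularized Dirac monopole curvature through the lower unit hemisphere (pulled back to
the unit disk, where `z = −√(1−x²−y²)` and `r = 1`) tends to `−2πα` as `ε → 0⁺`. -/
theorem wire_term_flux_limit (α : ℝ) :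
    Tendsto (fun ε : ℝ =>
        ∫ p in {p : ℝ × ℝ | p.1 ^ 2 + p.2 ^ 2 < 1},
          (-Real.sqrt (1 - p.1 ^ 2 - p.2 ^ 2) / Real.sqrt (1 + ε ^ 2) - 1)
            * (α * ε ^ 2 / (p.1 ^ 2 + p.2 ^ 2 + ε ^ 2) ^ 2))
      (nhdsWithin 0 (Set.Ioi 0)) (nhds (-(2 * π * α))) := by
  set D := {p : ℝ × ℝ | p.1 ^ 2 + p.2 ^ 2 < 1} with hDdef
  have key : Tendsto (fun ε : ℝ => ∫ p in D,
      (-Real.sqrt (1 - p.1 ^ 2 - p.2 ^ 2) / Real.sqrt (1 + ε ^ 2) - 1)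
        * (ε ^ 2 / (p.1 ^ 2 + p.2 ^ 2 + ε ^ 2) ^ 2))
      (nhdsWithin 0 (Set.Ioi 0)) (nhds (-(2 * π))) := by
    have hg : Tendsto (fun ε : ℝ => 2 * π * (ε ^ 2 / (1 + ε ^ 2) - 1))
        (nhdsWithin 0 (Set.Ioi 0)) (nhds (-(2 * π))) := by
      have hc : ContinuousAt (fun ε : ℝ => 2 * π * (ε ^ 2 / (1 + ε ^ 2) - 1)) 0 := by
        apply ContinuousAt.mul continuousAt_const
        exact (ContinuousAt.div (by fun_prop) (by fun_prop) (by norm_num)).sub continuousAt_const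
      have h := hc.tendsto.mono_left (nhdsWithin_le_nhds (s := Set.Ioi (0:ℝ)))
      convert h using 2
      norm_num
    have hh : Tendsto (fun ε : ℝ => 2 * π *
        (ε ^ 2 / 2 * (Real.log (1 + ε ^ 2) - Real.log (ε ^ 2)) + ε ^ 2 / (1 + ε ^ 2) - 1))
        (nhdsWithin 0 (Set.Ioi 0)) (nhds (-(2 * π))) := by
      have hA : Tendsto (fun ε : ℝ => ε ^ 2 / 2 * Real.log (1 + ε ^ 2))
          (nhdsWithin 0 (Set.Ioi 0)) (nhds 0) := by
        have hc : ContinuousAt (fun ε : ℝ => ε ^ 2 / 2 * Real.log (1 + ε ^ 2)) 0 := by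
          apply ContinuousAt.mul (by fun_prop)
          exact (Real.continuousAt_log (by norm_num)).comp (by fun_prop)
        have h := hc.tendsto.mono_left (nhdsWithin_le_nhds (s := Set.Ioi (0:ℝ)))
        convert h using 2
        norm_num
      have hB : Tendsto (fun ε : ℝ => ε ^ 2 / 2 * Real.log (ε ^ 2))
          (nhdsWithin 0 (Set.Ioi 0)) (nhds 0) := by
        have h0 := tendsto_log_mul_rpow_nhdsGT_zero (show (0:ℝ) < 2 by norm_num)
        refine h0.congr' ?_
        filter_upwards [self_mem_nhdsWithin] with ε hε
        rw [show ε ^ (2:ℝ) = ε ^ 2 by rw [← Real.rpow_natCast ε 2]; norm_num, Real.log_pow]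
        push_cast
        ring
      have hC : Tendsto (fun ε : ℝ => ε ^ 2 / (1 + ε ^ 2) - 1)
          (nhdsWithin 0 (Set.Ioi 0)) (nhds (-1)) := by
        have hc : ContinuousAt (fun ε : ℝ => ε ^ 2 / (1 + ε ^ 2) - 1) 0 :=
          (ContinuousAt.div (by fun_prop) (by fun_prop) (by norm_num)).sub continuousAt_const
        have h := hc.tendsto.mono_left (nhdsWithin_le_nhds (s := Set.Ioi (0:ℝ)))
        convert h using 2
        norm_num
      have hsum := ((hA.sub hB).add hC).const_mul (2 * π)
      rw [show 2 * π * ((0:ℝ) - 0 + -1) = -(2 * π) by ring] at hsum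
      exact hsum.congr fun ε => by ring
    refine tendsto_of_tendsto_of_tendsto_of_le_of_le' hg hh ?_ ?_
    · -- lower bound
      filter_upwards [self_mem_nhdsWithin] with ε hε
      have hε' : (0:ℝ) < ε := hε
      have e1 : 2 * π * (∫ r in Set.Ioo (0:ℝ) 1, r * (-2 * ε ^ 2 / (r ^ 2 + ε ^ 2) ^ 2))
          = ∫ p in D, (-2 * ε ^ 2 / (p.1 ^ 2 + p.2 ^ 2 + ε ^ 2) ^ 2) := by
        rw [hDdef]
        exact (disk_integral_radial (fun t => -2 * ε ^ 2 / (t + ε ^ 2) ^ 2)).symm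
      rw [int_lower hε'] at e1
      rw [e1]
      apply setIntegral_mono_on
      · rw [hDdef]
        exact integrableOn_disk (continuous_const.div (by fun_prop) (fun p => by positivity))
      · rw [hDdef]
        apply integrableOn_disk
        apply Continuous.mul
        · apply Continuous.sub _ continuous_const
          exact ((Real.continuous_sqrt.comp (by fun_prop)).neg).div_const _
        · exact continuous_const.div (by fun_prop) (fun p => by positivity)
      · rw [hDdef]; exact disk_measurable
      · intro p hp
        simp only [hDdef, Set.mem_setOf_eq] at hp
        have hk : (0:ℝ) ≤ ε ^ 2 / (p.1 ^ 2 + p.2 ^ 2 + ε ^ 2) ^ 2 := by positivity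
        have hs1 : Real.sqrt (1 - p.1 ^ 2 - p.2 ^ 2) ≤ 1 := by
          calc Real.sqrt (1 - p.1 ^ 2 - p.2 ^ 2) ≤ Real.sqrt 1 :=
            Real.sqrt_le_sqrt (by nlinarith [sq_nonneg p.1, sq_nonneg p.2])
          _ = 1 := Real.sqrt_one
        have hc1 : 1 ≤ Real.sqrt (1 + ε ^ 2) :=
          Real.le_sqrt_of_sq_le (by nlinarith)
        have hc0 : (0:ℝ) < Real.sqrt (1 + ε ^ 2) := by linarith
        have hdiv : Real.sqrt (1 - p.1 ^ 2 - p.2 ^ 2) / Real.sqrt (1 + ε ^ 2) ≤ 1 := by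
          rw [div_le_one hc0]
          linarith
        have hstep : (-2 : ℝ) ≤ -Real.sqrt (1 - p.1 ^ 2 - p.2 ^ 2) / Real.sqrt (1 + ε ^ 2) - 1 := by
          rw [neg_div]
          linarith
        calc -2 * ε ^ 2 / (p.1 ^ 2 + p.2 ^ 2 + ε ^ 2) ^ 2
            = (-2) * (ε ^ 2 / (p.1 ^ 2 + p.2 ^ 2 + ε ^ 2) ^ 2) := by ring
          _ ≤ (-Real.sqrt (1 - p.1 ^ 2 - p.2 ^ 2) / Real.sqrt (1 + ε ^ 2) - 1)
              * (ε ^ 2 / (p.1 ^ 2 + p.2 ^ 2 + ε ^ 2) ^ 2) :=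
            mul_le_mul_of_nonneg_right hstep hk
    · -- upper bound
      filter_upwards [self_mem_nhdsWithin] with ε hε
      have hε' : (0:ℝ) < ε := hε
      have e2 : 2 * π * (∫ r in Set.Ioo (0:ℝ) 1,
            r * ((r ^ 2 + ε ^ 2 - 2) * ε ^ 2 / (r ^ 2 + ε ^ 2) ^ 2))
          = ∫ p in D, ((p.1 ^ 2 + p.2 ^ 2 + ε ^ 2 - 2) * ε ^ 2
              / (p.1 ^ 2 + p.2 ^ 2 + ε ^ 2) ^ 2) := by
        rw [hDdef]
        exact (disk_integral_radial (fun t => (t + ε ^ 2 - 2) * ε ^ 2 / (t + ε ^ 2) ^ 2)).symm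
      rw [int_upper hε'] at e2
      rw [e2]
      apply setIntegral_mono_on
      · rw [hDdef]
        apply integrableOn_disk
        apply Continuous.mul
        · apply Continuous.sub _ continuous_const
          exact ((Real.continuous_sqrt.comp (by fun_prop)).neg).div_const _
        · exact continuous_const.div (by fun_prop) (fun p => by positivity)
      · rw [hDdef]
        exact integrableOn_disk ((by fun_prop :
            Continuous fun p : ℝ × ℝ => (p.1 ^ 2 + p.2 ^ 2 + ε ^ 2 - 2) * ε ^ 2).div
          (by fun_prop) (fun p => by positivity))
      · rw [hDdef]; exact disk_measurable
      · intro p hp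
        simp only [hDdef, Set.mem_setOf_eq] at hp
        have ht0 : (0:ℝ) ≤ p.1 ^ 2 + p.2 ^ 2 := by positivity
        have ht1 : p.1 ^ 2 + p.2 ^ 2 < 1 := hp
        have hs0 : 0 ≤ Real.sqrt (1 - p.1 ^ 2 - p.2 ^ 2) := Real.sqrt_nonneg _
        have hsge : 1 - (p.1 ^ 2 + p.2 ^ 2) ≤ Real.sqrt (1 - p.1 ^ 2 - p.2 ^ 2) := by
          have : 1 - p.1 ^ 2 - p.2 ^ 2 = 1 - (p.1 ^ 2 + p.2 ^ 2) := by ring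
          rw [this]
          exact Real.le_sqrt_of_sq_le (by nlinarith)
        have hc1 : 1 ≤ Real.sqrt (1 + ε ^ 2) := Real.le_sqrt_of_sq_le (by nlinarith)
        have hc0 : (0:ℝ) < Real.sqrt (1 + ε ^ 2) := by linarith
        have hcle : Real.sqrt (1 + ε ^ 2) ≤ 1 + ε ^ 2 :=
          (Real.sqrt_le_left (by positivity)).mpr (by nlinarith)
        have hk : (0:ℝ) ≤ ε ^ 2 / (p.1 ^ 2 + p.2 ^ 2 + ε ^ 2) ^ 2 := by positivity
        have h1 : 1 - (p.1 ^ 2 + p.2 ^ 2) - ε ^ 2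
            ≤ Real.sqrt (1 - p.1 ^ 2 - p.2 ^ 2) / Real.sqrt (1 + ε ^ 2) := by
          rw [le_div_iff₀ hc0]
          rcases le_or_gt (1 - (p.1 ^ 2 + p.2 ^ 2) - ε ^ 2) 0 with h | h
          · nlinarith
          · have h2 : (1 - (p.1 ^ 2 + p.2 ^ 2) - ε ^ 2) * Real.sqrt (1 + ε ^ 2)
                ≤ (1 - (p.1 ^ 2 + p.2 ^ 2) - ε ^ 2) * (1 + ε ^ 2) :=
              mul_le_mul_of_nonneg_left hcle h.le
            nlinarith [sq_nonneg ε]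
        have hstep : -Real.sqrt (1 - p.1 ^ 2 - p.2 ^ 2) / Real.sqrt (1 + ε ^ 2) - 1
            ≤ p.1 ^ 2 + p.2 ^ 2 + ε ^ 2 - 2 := by
          rw [neg_div]
          linarith
        calc (-Real.sqrt (1 - p.1 ^ 2 - p.2 ^ 2) / Real.sqrt (1 + ε ^ 2) - 1)
              * (ε ^ 2 / (p.1 ^ 2 + p.2 ^ 2 + ε ^ 2) ^ 2)
            ≤ (p.1 ^ 2 + p.2 ^ 2 + ε ^ 2 - 2) * (ε ^ 2 / (p.1 ^ 2 + p.2 ^ 2 + ε ^ 2) ^ 2) :=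
              mul_le_mul_of_nonneg_right hstep hk
          _ = (p.1 ^ 2 + p.2 ^ 2 + ε ^ 2 - 2) * ε ^ 2 / (p.1 ^ 2 + p.2 ^ 2 + ε ^ 2) ^ 2 := by
              ring
  have final := key.const_mul α
  rw [show α * -(2 * π) = -(2 * π * α) by ring] at final
  refine final.congr fun ε => ?_
  rw [← integral_const_mul]
  refine integral_congr_ae ?_
  filter_upwards with p
  ring
end

section
/- The limit as ε → 0⁺ of ∫_{{(x,y) : x² + y² < 1}} ( 1 − √(1 − x² − y²)/√(1 + ε²) ) · ε²/(x² + y² + ε²)² dx dy exists and equals 0. -/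
open Real MeasureTheory Filter

/-- pointwise bound: for ε > 0, the integrand has absolute value ≤ 1. -/
private lemma integrand_bound {ε : ℝ} (hε : 0 < ε) (p : ℝ × ℝ) :
    |(1 - Real.sqrt (1 - p.1 ^ 2 - p.2 ^ 2) / Real.sqrt (1 + ε ^ 2))
      * (ε ^ 2 / (p.1 ^ 2 + p.2 ^ 2 + ε ^ 2) ^ 2)| ≤ 1 := by
  set A := p.1 ^ 2 + p.2 ^ 2 with hA
  have hA0 : 0 ≤ A := by positivity
  have hD : 0 < A + ε ^ 2 := by positivity
  have ht1 : (1:ℝ) ≤ Real.sqrt (1 + ε ^ 2) := Real.one_le_sqrt.mpr (by nlinarith)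
  have ht0 : 0 < Real.sqrt (1 + ε ^ 2) := by linarith
  have hsq : Real.sqrt (1 + ε ^ 2) ^ 2 = 1 + ε ^ 2 := Real.sq_sqrt (by positivity)
  have hs0 : 0 ≤ Real.sqrt (1 - A) := Real.sqrt_nonneg _
  have hs1 : Real.sqrt (1 - A) ≤ 1 := Real.sqrt_le_one.mpr (by linarith)
  have hAA : 1 - p.1 ^ 2 - p.2 ^ 2 = 1 - A := by rw [hA]; ring
  have hfac0 : 0 ≤ 1 - Real.sqrt (1 - p.1 ^ 2 - p.2 ^ 2) / Real.sqrt (1 + ε ^ 2) := by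
    rw [sub_nonneg, div_le_one ht0, hAA]
    linarith
  have hkey : 1 - A ≤ Real.sqrt (1 - A) * Real.sqrt (1 + ε ^ 2) := by
    rcases le_or_gt (1 - A) 0 with h | h
    · nlinarith
    · have h2 : Real.sqrt (1 - A) ^ 2 = 1 - A := Real.sq_sqrt h.le
      nlinarith
  have hfac : 1 - Real.sqrt (1 - p.1 ^ 2 - p.2 ^ 2) / Real.sqrt (1 + ε ^ 2)
      ≤ (A + ε ^ 2) / (1 + ε ^ 2) := by
    rw [hAA, sub_le_iff_le_add]
    have h1 : (1 - A) / (1 + ε ^ 2) ≤ Real.sqrt (1 - A) / Real.sqrt (1 + ε ^ 2) := by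
      rw [div_le_div_iff₀ (by positivity) ht0]
      nlinarith [mul_le_mul_of_nonneg_right hkey ht0.le]
    have h2 : (A + ε ^ 2) / (1 + ε ^ 2) + (1 - A) / (1 + ε ^ 2) = 1 := by
      field_simp
      ring
    linarith
  have hker0 : 0 ≤ ε ^ 2 / (A + ε ^ 2) ^ 2 := by positivity
  rw [abs_of_nonneg (mul_nonneg hfac0 hker0)]
  calc (1 - Real.sqrt (1 - p.1 ^ 2 - p.2 ^ 2) / Real.sqrt (1 + ε ^ 2))
        * (ε ^ 2 / (A + ε ^ 2) ^ 2)
      ≤ ((A + ε ^ 2) / (1 + ε ^ 2)) * (ε ^ 2 / (A + ε ^ 2) ^ 2) :=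
        mul_le_mul_of_nonneg_right hfac hker0
    _ ≤ 1 := by
        rw [div_mul_div_comm, div_le_one (by positivity)]
        nlinarith

/-- The correction term in the flux of the wire part of the regularized Dirac monopole
curvature through the lower unit hemisphere tends to `0` as `ε → 0⁺`:
`∫_{x²+y²<1} (1 − √(1−x²−y²)/√(1+ε²)) · ε²/(x²+y²+ε²)² dx dy → 0`. -/
theorem wire_term_correction_limit :
    Tendsto (fun ε : ℝ =>
        ∫ p in {p : ℝ × ℝ | p.1 ^ 2 + p.2 ^ 2 < 1},
          (1 - Real.sqrt (1 - p.1 ^ 2 - p.2 ^ 2) / Real.sqrt (1 + ε ^ 2))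
            * (ε ^ 2 / (p.1 ^ 2 + p.2 ^ 2 + ε ^ 2) ^ 2))
      (nhdsWithin 0 (Set.Ioi 0)) (nhds 0) := by
  set s : Set (ℝ × ℝ) := {p : ℝ × ℝ | p.1 ^ 2 + p.2 ^ 2 < 1} with hs
  have hfin : volume s < ⊤ := by
    have hsub : s ⊆ Set.Ioo (-1:ℝ) 1 ×ˢ Set.Ioo (-1:ℝ) 1 := by
      intro p hp
      simp only [hs, Set.mem_setOf_eq] at hp
      constructor <;> constructor <;> nlinarith [sq_nonneg p.1, sq_nonneg p.2]
    refine lt_of_le_of_lt (measure_mono hsub) ?_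
    rw [Measure.volume_eq_prod, Measure.prod_prod, Real.volume_Ioo]
    norm_num
  have H : Tendsto (fun ε : ℝ =>
        ∫ p in s,
          (1 - Real.sqrt (1 - p.1 ^ 2 - p.2 ^ 2) / Real.sqrt (1 + ε ^ 2))
            * (ε ^ 2 / (p.1 ^ 2 + p.2 ^ 2 + ε ^ 2) ^ 2))
      (nhdsWithin 0 (Set.Ioi 0)) (nhds (∫ _ in s, (0:ℝ))) := by
    apply MeasureTheory.tendsto_integral_filter_of_dominated_convergence
        (bound := fun _ => (1:ℝ))
    · filter_upwards [self_mem_nhdsWithin] with ε (hε : ε ∈ Set.Ioi 0)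
      have hε' : (0:ℝ) < ε := hε
      have hc : Continuous fun p : ℝ × ℝ =>
          (1 - Real.sqrt (1 - p.1 ^ 2 - p.2 ^ 2) / Real.sqrt (1 + ε ^ 2))
            * (ε ^ 2 / (p.1 ^ 2 + p.2 ^ 2 + ε ^ 2) ^ 2) := by
        apply Continuous.mul
        · apply Continuous.sub continuous_const
          apply Continuous.div_const
          exact Real.continuous_sqrt.comp
            (((continuous_const.sub (continuous_fst.pow 2))).sub (continuous_snd.pow 2))
        · apply Continuous.div continuous_const
          · fun_prop
          · intro p
            have : (0:ℝ) < p.1 ^ 2 + p.2 ^ 2 + ε ^ 2 := by positivity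
            positivity
      exact hc.aestronglyMeasurable
    · filter_upwards [self_mem_nhdsWithin] with ε (hε : ε ∈ Set.Ioi 0)
      exact Filter.Eventually.of_forall fun p => by
        rw [Real.norm_eq_abs]; exact integrand_bound hε p
    · haveI := Fact.mk hfin
      exact integrable_const 1
    · -- pointwise a.e. limit
      have hnull : (volume.restrict s) {((0:ℝ),(0:ℝ))} = 0 :=
        le_antisymm (le_trans (Measure.restrict_le_self _) (by simp [measure_singleton])) zero_le
      filter_upwards [measure_eq_zero_iff_ae_notMem.mp hnull] with p hp
      have hne : ¬(p.1 = 0 ∧ p.2 = 0) := fun h => hp (by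
        simp only [Set.mem_singleton_iff, Prod.ext_iff]; exact ⟨h.1, h.2⟩)
      have hApos : (0:ℝ) < p.1 ^ 2 + p.2 ^ 2 := by
        rcases not_and_or.mp hne with h | h <;> positivity
      have hc : ContinuousAt (fun ε : ℝ =>
          (1 - Real.sqrt (1 - p.1 ^ 2 - p.2 ^ 2) / Real.sqrt (1 + ε ^ 2))
            * (ε ^ 2 / (p.1 ^ 2 + p.2 ^ 2 + ε ^ 2) ^ 2)) 0 := by
        apply ContinuousAt.mul
        · apply ContinuousAt.sub continuousAt_const
          apply ContinuousAt.div continuousAt_const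
          · exact Real.continuous_sqrt.continuousAt.comp (by fun_prop)
          · simp
        · apply ContinuousAt.div (by fun_prop) (by fun_prop)
          have : (0:ℝ) < p.1 ^ 2 + p.2 ^ 2 + (0:ℝ) ^ 2 := by
            simpa using hApos
          positivity
      have ht := hc.tendsto.mono_left (nhdsWithin_le_nhds (s := Set.Ioi (0:ℝ)))
      simpa using ht
  simpa using H
end

section
/- The limit as ε → 0⁺ of ∫_{{(x,y) : x² + y² < 1}} ε² √(1 − x² − y²) / ( 2(1 + ε²)^{3/2} (x² + y² + ε²) ) dx dy exists and equals 0. -/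
open Real MeasureTheory Filter Topology

/-!
For every `ε` the integrand is bounded by `1/2`, since `√(1 - x² - y²) ≤ 1`,
`√(1 + ε²)³ ≥ 1` and `ε² ≤ x² + y² + ε²`, and the disk has finite measure; off the origin
the integrand tends to `0` with `ε`. Dominated convergence gives even the two-sided limit.
-/

lemma abs_sq_mul_sqrt_div_le_half {ε s t : ℝ} (hs : 0 ≤ s) (ht : t ≤ 1) :
    |ε ^ 2 * √t / (2 * √(1 + ε ^ 2) ^ 3 * (s + ε ^ 2))| ≤ 1 / 2 := by
  have hsqrt : √t ≤ 1 := Real.sqrt_le_one.mpr ht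
  have hcube : 1 ≤ √(1 + ε ^ 2) ^ 3 :=
    one_le_pow₀ (Real.one_le_sqrt.mpr (by nlinarith))
  rw [abs_of_nonneg (by positivity)]
  rcases (add_nonneg hs (sq_nonneg ε)).eq_or_lt with h0 | hpos
  · simp [← h0]
  rw [div_le_iff₀ (by positivity)]
  nlinarith [Real.sqrt_nonneg t, mul_le_mul_of_nonneg_left hcube hpos.le]

lemma tendsto_sq_mul_div_sqrt_one_add_sq_pow_three {s : ℝ} (hs : s ≠ 0) (a : ℝ) :
    Tendsto (fun ε : ℝ => ε ^ 2 * a / (2 * √(1 + ε ^ 2) ^ 3 * (s + ε ^ 2))) (𝓝 0) (𝓝 0) := by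
  have hcont : ContinuousAt (fun ε : ℝ => ε ^ 2 * a / (2 * √(1 + ε ^ 2) ^ 3 * (s + ε ^ 2))) 0 := by
    apply ContinuousAt.div (by fun_prop) (by fun_prop)
    simpa using hs
  simpa using hcont.tendsto

lemma isBounded_setOf_sq_add_sq_lt_one :
    Bornology.IsBounded {p : ℝ × ℝ | p.1 ^ 2 + p.2 ^ 2 < 1} := by
  refine (Metric.isBounded_ball (x := (0 : ℝ × ℝ)) (r := 1)).subset fun p hp => ?_
  have h1 : p.1 ^ 2 < 1 := by nlinarith [sq_nonneg p.2, hp.out]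
  have h2 : p.2 ^ 2 < 1 := by nlinarith [sq_nonneg p.1, hp.out]
  simpa [Prod.norm_def, ← sq_lt_one_iff_abs_lt_one] using ⟨h1, h2⟩

/-- The flux of the correction term `F²_ε` of the regularized Dirac monopole curvature
through a unit hemisphere vanishes in the limit:
`∫_{x²+y²<1} ε²√(1−x²−y²)/(2(1+ε²)^{3/2}(x²+y²+ε²)) dx dy → 0` as `ε → 0⁺`. -/
theorem correction_term_flux_limit :
    Tendsto (fun ε : ℝ =>
        ∫ p in {p : ℝ × ℝ | p.1 ^ 2 + p.2 ^ 2 < 1},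
          ε ^ 2 * Real.sqrt (1 - p.1 ^ 2 - p.2 ^ 2)
            / (2 * (Real.sqrt (1 + ε ^ 2)) ^ 3 * (p.1 ^ 2 + p.2 ^ 2 + ε ^ 2)))
      (nhdsWithin 0 (Set.Ioi 0)) (nhds 0) := by
  set D : Set (ℝ × ℝ) := {p | p.1 ^ 2 + p.2 ^ 2 < 1}
  have hlim : Tendsto (fun ε : ℝ => ∫ p in D,
      ε ^ 2 * √(1 - p.1 ^ 2 - p.2 ^ 2) / (2 * √(1 + ε ^ 2) ^ 3 * (p.1 ^ 2 + p.2 ^ 2 + ε ^ 2)))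
      (𝓝 0) (𝓝 (∫ _ in D, (0 : ℝ))) := by
    refine tendsto_integral_filter_of_dominated_convergence (fun _ => 1 / 2)
      (.of_forall fun ε => (by fun_prop : Measurable _).aestronglyMeasurable)
      (.of_forall fun ε => .of_forall fun p => ?_) ?_ ?_
    · exact abs_sq_mul_sqrt_div_le_half (by positivity) (by nlinarith)
    · exact integrableOn_const isBounded_setOf_sq_add_sq_lt_one.measure_lt_top.ne
    · refine ae_restrict_of_ae <| (Measure.ae_ne volume 0).mono fun p hp =>
        tendsto_sq_mul_div_sqrt_one_add_sq_pow_three ?_ _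
      contrapose! hp
      ext <;> apply pow_eq_zero_iff two_ne_zero |>.mp <;> nlinarith [sq_nonneg p.1, sq_nonneg p.2]
  simpa using hlim.mono_left nhdsWithin_le_nhds
end
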